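/- arXiv:2501.02202 — 4 statements merged into one kernel-verified Lean document; each statement's English description precedes it below -/
import Mathlib

section
/- Integral estimates for the interior Green function: for all constants m > 0, M > 0, k > 0, K > 0, C₀ > 0 there exists C > 0 such that the following holds. Let λ ∈ ℂ with |λ| ≥ 1 and let a, b, μ_s, μ_f ∈ ℂ satisfy Re μ_s ≥ m, |μ_s| ≤ M, Re μ_f ≥ k|λ|^{1/2}, |μ_f| ≤ K|λ|^{1/2}, |a| ≤ C₀|λ|^{−3/2} and |b| ≤ C₀|λ|^{−1}. Define, for x, y ∈ [0,1], G^{int}(x,y) = a[e^{−μ_f|x−y|} + e^{−μ_f|x−(1−y)|}] + b[e^{−μ_s|x−y|} + e^{−μ_s|x−(1−y)|}]. Then for every x ∈ [0,1]: ∫₀¹ |G^{int}(x,y)| dy + ∫₀¹ |∂_y G^{int}(x,y)| dy + ∫₀¹ |∂_y² G^{int}(x,y)| dy ≤ C |λ|^{−1}, where ∂_y G^{int} and ∂_y² G^{int} denote the derivatives in y, which exist for y ∉ {x, 1−x}. -/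
open MeasureTheory

/-- The symmetrized interior Green function
`G^{int}(x,y) = a[e^{-μ_f|x-y|} + e^{-μ_f|x-(1-y)|}] + b[e^{-μ_s|x-y|} + e^{-μ_s|x-(1-y)|}]`. -/
noncomputable def Gint (a b μs μf : ℂ) (x y : ℝ) : ℂ :=
  a * (Complex.exp (-μf * (|x - y| : ℝ)) + Complex.exp (-μf * (|x - (1 - y)| : ℝ)))
    + b * (Complex.exp (-μs * (|x - y| : ℝ)) + Complex.exp (-μs * (|x - (1 - y)| : ℝ)))

namespace GintAux

noncomputable def Eexp (μ : ℂ) (c y : ℝ) : ℂ := Complex.exp (-μ * (|c - y| : ℝ))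

noncomputable def sgn (c y : ℝ) : ℝ := if c < y then 1 else -1

lemma sgn_eq_or (c y : ℝ) : sgn c y = 1 ∨ sgn c y = -1 := by
  unfold sgn; split <;> simp

lemma abs_sgn (c y : ℝ) : |sgn c y| = 1 := by
  rcases sgn_eq_or c y with h | h <;> simp [h]

lemma abs_Eexp (μ : ℂ) (c y : ℝ) :
    ‖Eexp μ c y‖ = Real.exp (-μ.re * |c - y|) := by
  rw [Eexp, Complex.norm_exp]
  norm_num

lemma Eexp_le_one {μ : ℂ} (hμ : 0 ≤ μ.re) (c y : ℝ) : ‖Eexp μ c y‖ ≤ 1 := by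
  rw [abs_Eexp]
  rw [Real.exp_le_one_iff]
  have : 0 ≤ μ.re * |c - y| := mul_nonneg hμ (abs_nonneg _)
  linarith

lemma continuous_Eexp (μ : ℂ) (c : ℝ) : Continuous (Eexp μ c) := by
  unfold Eexp; fun_prop

lemma hasDerivAt_abs_sub (c : ℝ) {y : ℝ} (h : y ≠ c) :
    HasDerivAt (fun t => |c - t|) (sgn c y) y := by
  have h1 : (fun t => |c - t|) = fun t => |t - c| := by
    funext t; rw [abs_sub_comm]
  rw [h1]
  have h2 : y - c ≠ 0 := sub_ne_zero.2 h
  have := (hasDerivAt_abs h2).comp y ((hasDerivAt_id y).sub_const c)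
  refine this.congr_deriv ?_
  rcases lt_or_gt_of_ne h with hlt | hgt
  · have hneg : y - c < 0 := by linarith
    simp [sgn, not_lt.2 hlt.le, sign_neg hneg]
  · have hpos : 0 < y - c := by linarith
    simp [sgn, hgt, sign_pos hpos]

lemma hasDerivAt_Eexp (μ : ℂ) (c : ℝ) {y : ℝ} (h : y ≠ c) :
    HasDerivAt (Eexp μ c) (-μ * (sgn c y : ℝ) * Eexp μ c y) y := by
  have hinner : HasDerivAt (fun t : ℝ => -μ * ((|c - t| : ℝ) : ℂ)) (-μ * (sgn c y : ℝ)) y :=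
    ((hasDerivAt_abs_sub c h).ofReal_comp).const_mul (-μ)
  have := hinner.cexp
  refine this.congr_deriv ?_
  rw [Eexp]; ring

lemma Gint_eq (a b μs μf : ℂ) (x y : ℝ) :
    Gint a b μs μf x y
      = a * (Eexp μf x y + Eexp μf (1 - x) y) + b * (Eexp μs x y + Eexp μs (1 - x) y) := by
  have h : |x - (1 - y)| = |1 - x - y| := by
    rw [show x - (1 - y) = -(1 - x - y) by ring, abs_neg]
  simp only [Gint, Eexp, h]

lemma continuous_Gint (a b μs μf : ℂ) (x : ℝ) :
    Continuous (fun y => Gint a b μs μf x y) := by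
  have : (fun y => Gint a b μs μf x y)
      = fun y => a * (Eexp μf x y + Eexp μf (1 - x) y) + b * (Eexp μs x y + Eexp μs (1 - x) y) :=
    funext fun y => Gint_eq a b μs μf x y
  rw [this]
  exact (continuous_const.mul ((continuous_Eexp μf x).add (continuous_Eexp μf (1 - x)))).add
    (continuous_const.mul ((continuous_Eexp μs x).add (continuous_Eexp μs (1 - x))))

/-- First derivative of the Green function in `y`, away from the kinks. -/
noncomputable def D1 (a b μs μf : ℂ) (x : ℝ) : ℝ → ℂ := fun y =>
  a * (-μf * (sgn x y : ℝ) * Eexp μf x y + -μf * (sgn (1 - x) y : ℝ) * Eexp μf (1 - x) y)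
    + b * (-μs * (sgn x y : ℝ) * Eexp μs x y + -μs * (sgn (1 - x) y : ℝ) * Eexp μs (1 - x) y)

lemma hasDerivAt_Gint (a b μs μf : ℂ) (x : ℝ) {y : ℝ} (h1 : y ≠ x) (h2 : y ≠ 1 - x) :
    HasDerivAt (fun y => Gint a b μs μf x y) (D1 a b μs μf x y) y := by
  have heq : (fun y => Gint a b μs μf x y)
      = fun y => a * (Eexp μf x y + Eexp μf (1 - x) y) + b * (Eexp μs x y + Eexp μs (1 - x) y) :=
    funext fun y => Gint_eq a b μs μf x y
  rw [heq]
  exact ((((hasDerivAt_Eexp μf x h1).add (hasDerivAt_Eexp μf (1 - x) h2)).const_mul a).add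
    (((hasDerivAt_Eexp μs x h1).add (hasDerivAt_Eexp μs (1 - x) h2)).const_mul b))

lemma eventually_sgn {c y : ℝ} (h : y ≠ c) : ∀ᶠ t in nhds y, sgn c t = sgn c y := by
  rcases lt_or_gt_of_ne h with hlt | hgt
  · filter_upwards [Iio_mem_nhds hlt] with t ht
    simp [sgn, not_lt.2 (Set.mem_Iio.1 ht).le, not_lt.2 hlt.le]
  · filter_upwards [Ioi_mem_nhds hgt] with t ht
    simp [sgn, Set.mem_Ioi.1 ht, hgt]

lemma eventually_ne {c y : ℝ} (h : y ≠ c) : ∀ᶠ t in nhds y, t ≠ c :=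
  eventually_ne_nhds h

lemma hasDerivAt_D1 (a b μs μf : ℂ) (x : ℝ) {y : ℝ} (h1 : y ≠ x) (h2 : y ≠ 1 - x) :
    HasDerivAt (D1 a b μs μf x)
      (a * (μf ^ 2 * Eexp μf x y + μf ^ 2 * Eexp μf (1 - x) y)
        + b * (μs ^ 2 * Eexp μs x y + μs ^ 2 * Eexp μs (1 - x) y)) y := by
  set s1 : ℝ := sgn x y with hs1
  set s2 : ℝ := sgn (1 - x) y with hs2
  have hfrozen : HasDerivAt
      (fun t => a * (-μf * (s1 : ℝ) * Eexp μf x t + -μf * (s2 : ℝ) * Eexp μf (1 - x) t)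
        + b * (-μs * (s1 : ℝ) * Eexp μs x t + -μs * (s2 : ℝ) * Eexp μs (1 - x) t))
      (a * (-μf * (s1 : ℝ) * (-μf * (s1 : ℝ) * Eexp μf x y)
            + -μf * (s2 : ℝ) * (-μf * (s2 : ℝ) * Eexp μf (1 - x) y))
        + b * (-μs * (s1 : ℝ) * (-μs * (s1 : ℝ) * Eexp μs x y)
            + -μs * (s2 : ℝ) * (-μs * (s2 : ℝ) * Eexp μs (1 - x) y))) y := by
    exact ((((hasDerivAt_Eexp μf x h1).const_mul (-μf * (s1 : ℝ))).add
        ((hasDerivAt_Eexp μf (1 - x) h2).const_mul (-μf * (s2 : ℝ)))).const_mul a).add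
      ((((hasDerivAt_Eexp μs x h1).const_mul (-μs * (s1 : ℝ))).add
        ((hasDerivAt_Eexp μs (1 - x) h2).const_mul (-μs * (s2 : ℝ)))).const_mul b)
  have heq : D1 a b μs μf x =ᶠ[nhds y]
      (fun t => a * (-μf * (s1 : ℝ) * Eexp μf x t + -μf * (s2 : ℝ) * Eexp μf (1 - x) t)
        + b * (-μs * (s1 : ℝ) * Eexp μs x t + -μs * (s2 : ℝ) * Eexp μs (1 - x) t)) := by
    filter_upwards [eventually_sgn h1, eventually_sgn h2] with t ht1 ht2
    simp only [D1, ht1, ht2]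
    rfl
  have := hfrozen.congr_of_eventuallyEq heq
  refine this.congr_deriv ?_
  have hs1' : ((s1 : ℝ) : ℂ) * ((s1 : ℝ) : ℂ) = 1 := by
    rcases sgn_eq_or x y with h | h <;> rw [← hs1] at h <;> simp [h]
  have hs2' : ((s2 : ℝ) : ℂ) * ((s2 : ℝ) : ℂ) = 1 := by
    rcases sgn_eq_or (1 - x) y with h | h <;> rw [← hs2] at h <;> simp [h]
  have e1 : -μf * (s1:ℝ) * (-μf * (s1:ℝ) * Eexp μf x y) = μf ^ 2 * Eexp μf x y := by
    rw [show -μf * (s1:ℝ) * (-μf * (s1:ℝ) * Eexp μf x y)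
        = μf ^ 2 * (((s1:ℝ):ℂ) * ((s1:ℝ):ℂ)) * Eexp μf x y by ring, hs1', mul_one]
  have e2 : -μf * (s2:ℝ) * (-μf * (s2:ℝ) * Eexp μf (1-x) y) = μf ^ 2 * Eexp μf (1-x) y := by
    rw [show -μf * (s2:ℝ) * (-μf * (s2:ℝ) * Eexp μf (1-x) y)
        = μf ^ 2 * (((s2:ℝ):ℂ) * ((s2:ℝ):ℂ)) * Eexp μf (1-x) y by ring, hs2', mul_one]
  have e3 : -μs * (s1:ℝ) * (-μs * (s1:ℝ) * Eexp μs x y) = μs ^ 2 * Eexp μs x y := by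
    rw [show -μs * (s1:ℝ) * (-μs * (s1:ℝ) * Eexp μs x y)
        = μs ^ 2 * (((s1:ℝ):ℂ) * ((s1:ℝ):ℂ)) * Eexp μs x y by ring, hs1', mul_one]
  have e4 : -μs * (s2:ℝ) * (-μs * (s2:ℝ) * Eexp μs (1-x) y) = μs ^ 2 * Eexp μs (1-x) y := by
    rw [show -μs * (s2:ℝ) * (-μs * (s2:ℝ) * Eexp μs (1-x) y)
        = μs ^ 2 * (((s2:ℝ):ℂ) * ((s2:ℝ):ℂ)) * Eexp μs (1-x) y by ring, hs2', mul_one]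
  rw [e1, e2, e3, e4]

lemma deriv_Gint (a b μs μf : ℂ) (x : ℝ) {y : ℝ} (h1 : y ≠ x) (h2 : y ≠ 1 - x) :
    deriv (fun y => Gint a b μs μf x y) y = D1 a b μs μf x y :=
  (hasDerivAt_Gint a b μs μf x h1 h2).deriv

lemma deriv2_Gint (a b μs μf : ℂ) (x : ℝ) {y : ℝ} (h1 : y ≠ x) (h2 : y ≠ 1 - x) :
    deriv (deriv (fun y => Gint a b μs μf x y)) y
      = a * (μf ^ 2 * Eexp μf x y + μf ^ 2 * Eexp μf (1 - x) y)
        + b * (μs ^ 2 * Eexp μs x y + μs ^ 2 * Eexp μs (1 - x) y) := by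
  have heq : deriv (fun y => Gint a b μs μf x y) =ᶠ[nhds y] D1 a b μs μf x := by
    filter_upwards [eventually_ne h1, eventually_ne h2] with t ht1 ht2
    exact deriv_Gint a b μs μf x ht1 ht2
  rw [heq.deriv_eq]
  exact (hasDerivAt_D1 a b μs μf x h1 h2).deriv

lemma integral_exp_abs_le {r c : ℝ} (hr : 0 < r) (hc0 : 0 ≤ c) (hc1 : c ≤ 1) :
    ∫ y in (0:ℝ)..1, Real.exp (-r * |c - y|) ≤ 2 / r := by
  have hcont : Continuous fun y : ℝ => Real.exp (-r * |c - y|) := by fun_prop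
  have hi1 : IntervalIntegrable (fun y => Real.exp (-r * |c - y|)) volume 0 c :=
    hcont.intervalIntegrable _ _
  have hi2 : IntervalIntegrable (fun y => Real.exp (-r * |c - y|)) volume c 1 :=
    hcont.intervalIntegrable _ _
  rw [← intervalIntegral.integral_add_adjacent_intervals hi1 hi2]
  have hleft : ∫ y in (0:ℝ)..c, Real.exp (-r * |c - y|) ≤ 1 / r := by
    have heq : ∫ y in (0:ℝ)..c, Real.exp (-r * |c - y|)
        = ∫ y in (0:ℝ)..c, Real.exp (r * y - r * c) := by
      apply intervalIntegral.integral_congr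
      intro y hy
      rw [Set.uIcc_of_le hc0] at hy
      simp only []
      rw [abs_of_nonneg (by linarith [hy.2] : (0:ℝ) ≤ c - y),
        show -r * (c - y) = r * y - r * c by ring]
    rw [heq]
    have hF : ∀ y ∈ Set.uIcc (0:ℝ) c,
        HasDerivAt (fun y => Real.exp (r * y - r * c) / r) (Real.exp (r * y - r * c)) y := by
      intro y _
      have h1 : HasDerivAt (fun y : ℝ => r * y - r * c) r y := by
        simpa using ((hasDerivAt_id y).const_mul r).sub_const (r * c)
      have h2 := h1.exp.div_const r
      refine h2.congr_deriv ?_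
      field_simp
    rw [intervalIntegral.integral_eq_sub_of_hasDerivAt hF
      ((by fun_prop : Continuous fun y : ℝ => Real.exp (r * y - r * c)).intervalIntegrable _ _)]
    have h0 : (0:ℝ) ≤ Real.exp (r * 0 - r * c) / r := by positivity
    have h1 : Real.exp (r * c - r * c) / r = 1 / r := by simp
    linarith
  have hright : ∫ y in c..(1:ℝ), Real.exp (-r * |c - y|) ≤ 1 / r := by
    have heq : ∫ y in c..(1:ℝ), Real.exp (-r * |c - y|)
        = ∫ y in c..(1:ℝ), Real.exp (r * c - r * y) := by
      apply intervalIntegral.integral_congr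
      intro y hy
      rw [Set.uIcc_of_le hc1] at hy
      simp only []
      rw [abs_of_nonpos (by linarith [hy.1] : c - y ≤ (0:ℝ)),
        show -r * -(c - y) = r * c - r * y by ring]
    rw [heq]
    have hF : ∀ y ∈ Set.uIcc c (1:ℝ),
        HasDerivAt (fun y => -(Real.exp (r * c - r * y) / r)) (Real.exp (r * c - r * y)) y := by
      intro y _
      have h1 : HasDerivAt (fun y : ℝ => r * c - r * y) (-r) y := by
        simpa using ((hasDerivAt_id y).const_mul r).const_sub (r * c)
      have h2 := (h1.exp.div_const r).neg
      refine h2.congr_deriv ?_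
      field_simp
    rw [intervalIntegral.integral_eq_sub_of_hasDerivAt hF
      ((by fun_prop : Continuous fun y : ℝ => Real.exp (r * c - r * y)).intervalIntegrable _ _)]
    have h0 : (0:ℝ) ≤ Real.exp (r * c - r * 1) / r := by positivity
    have h1 : Real.exp (r * c - r * c) / r = 1 / r := by simp
    linarith
  have htwo : 1 / r + 1 / r = 2 / r := by ring
  linarith

lemma abs_Gint_le {μs μf : ℂ} (hfs : 0 ≤ μs.re) (hff : 0 ≤ μf.re) (a b : ℂ) (x y : ℝ) :
    ‖Gint a b μs μf x y‖ ≤ 2 * ‖a‖ + 2 * ‖b‖ := by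
  rw [Gint_eq]
  have e1 : ‖Eexp μf x y + Eexp μf (1 - x) y‖ ≤ 2 :=
    (norm_add_le _ _).trans (by linarith [Eexp_le_one hff x y, Eexp_le_one hff (1 - x) y])
  have e2 : ‖Eexp μs x y + Eexp μs (1 - x) y‖ ≤ 2 :=
    (norm_add_le _ _).trans (by linarith [Eexp_le_one hfs x y, Eexp_le_one hfs (1 - x) y])
  refine (norm_add_le _ _).trans ?_
  rw [norm_mul, norm_mul]
  have ha := norm_nonneg a
  have hb := norm_nonneg b
  nlinarith [norm_nonneg (Eexp μf x y + Eexp μf (1 - x) y),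
    norm_nonneg (Eexp μs x y + Eexp μs (1 - x) y)]

lemma abs_D1_le {μs μf : ℂ} (hfs : 0 ≤ μs.re) (hff : 0 ≤ μf.re) (a b : ℂ) (x y : ℝ) :
    ‖D1 a b μs μf x y‖
      ≤ 2 * (‖a‖ * ‖μf‖) + 2 * (‖b‖ * ‖μs‖) := by
  have key : ∀ (μ : ℂ), 0 ≤ μ.re → ∀ c : ℝ,
      ‖-μ * (sgn c y : ℝ) * Eexp μ c y‖ ≤ ‖μ‖ := by
    intro μ hμ c
    rw [norm_mul, norm_mul, norm_neg, Complex.norm_real, Real.norm_eq_abs, abs_sgn, mul_one]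
    calc ‖μ‖ * ‖Eexp μ c y‖ ≤ ‖μ‖ * 1 :=
          mul_le_mul_of_nonneg_left (Eexp_le_one hμ c y) (norm_nonneg μ)
      _ = ‖μ‖ := mul_one _
  have e1 : ‖-μf * (sgn x y : ℝ) * Eexp μf x y
      + -μf * (sgn (1 - x) y : ℝ) * Eexp μf (1 - x) y‖ ≤ 2 * ‖μf‖ :=
    (norm_add_le _ _).trans (by linarith [key μf hff x, key μf hff (1 - x)])
  have e2 : ‖-μs * (sgn x y : ℝ) * Eexp μs x y
      + -μs * (sgn (1 - x) y : ℝ) * Eexp μs (1 - x) y‖ ≤ 2 * ‖μs‖ :=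
    (norm_add_le _ _).trans (by linarith [key μs hfs x, key μs hfs (1 - x)])
  rw [D1]
  refine (norm_add_le _ _).trans ?_
  rw [norm_mul, norm_mul]
  have ha := norm_nonneg a
  have hb := norm_nonneg b
  nlinarith [norm_nonneg (-μf * (sgn x y : ℝ) * Eexp μf x y
      + -μf * (sgn (1 - x) y : ℝ) * Eexp μf (1 - x) y),
    norm_nonneg (-μs * (sgn x y : ℝ) * Eexp μs x y
      + -μs * (sgn (1 - x) y : ℝ) * Eexp μs (1 - x) y)]

lemma abs_D2_le (a b μs μf : ℂ) (x y : ℝ) :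
    ‖a * (μf ^ 2 * Eexp μf x y + μf ^ 2 * Eexp μf (1 - x) y)
        + b * (μs ^ 2 * Eexp μs x y + μs ^ 2 * Eexp μs (1 - x) y)‖
      ≤ ‖a‖ * ‖μf‖ ^ 2
          * (Real.exp (-μf.re * |x - y|) + Real.exp (-μf.re * |1 - x - y|))
        + ‖b‖ * ‖μs‖ ^ 2
          * (Real.exp (-μs.re * |x - y|) + Real.exp (-μs.re * |1 - x - y|)) := by
  have key : ∀ (μ : ℂ), ‖μ ^ 2 * Eexp μ x y + μ ^ 2 * Eexp μ (1 - x) y‖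
      ≤ ‖μ‖ ^ 2 * (Real.exp (-μ.re * |x - y|) + Real.exp (-μ.re * |1 - x - y|)) := by
    intro μ
    refine (norm_add_le _ _).trans (le_of_eq ?_)
    rw [norm_mul, norm_mul, norm_pow, abs_Eexp, abs_Eexp]
    ring
  refine (norm_add_le _ _).trans ?_
  rw [norm_mul, norm_mul]
  rw [mul_assoc, mul_assoc]
  exact add_le_add (mul_le_mul_of_nonneg_left (key μf) (norm_nonneg a))
    (mul_le_mul_of_nonneg_left (key μs) (norm_nonneg b))

end GintAux

open GintAux

set_option maxHeartbeats 1000000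

/-- Integral estimates for the interior Green function: the `L¹_y` norms of `G^{int}` and of
its first two derivatives in `y` are bounded by `C |λ|⁻¹`. -/
theorem Gint_integral_estimates (m M k K C₀ : ℝ)
    (hm : 0 < m) (hM : 0 < M) (hk : 0 < k) (hK : 0 < K) (hC₀ : 0 < C₀) :
    ∃ C > (0:ℝ), ∀ (lam a b μs μf : ℂ),
      1 ≤ ‖lam‖ →
      m ≤ μs.re → ‖μs‖ ≤ M →
      k * (‖lam‖) ^ ((1:ℝ)/2) ≤ μf.re →
      ‖μf‖ ≤ K * (‖lam‖) ^ ((1:ℝ)/2) →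
      ‖a‖ ≤ C₀ * (‖lam‖) ^ (-(3:ℝ)/2) →
      ‖b‖ ≤ C₀ * (‖lam‖)⁻¹ →
      ∀ x ∈ Set.Icc (0:ℝ) 1,
        (∫ y in (0:ℝ)..1, ‖(Gint a b μs μf x y)‖)
          + (∫ y in (0:ℝ)..1, ‖(deriv (fun y' => Gint a b μs μf x y') y)‖)
          + (∫ y in (0:ℝ)..1,
              ‖(deriv (deriv (fun y' => Gint a b μs μf x y')) y)‖)
        ≤ C * (‖lam‖)⁻¹ := by
  refine ⟨4*C₀ + 2*C₀*(K+M) + (4*C₀*K^2/k + 4*C₀*M^2/m), by positivity, ?_⟩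
  intro lam a b μs μf hL hms hMs hkf hKf ha hb x hx
  obtain ⟨hx0, hx1⟩ := hx
  set L := ‖lam‖ with hLdef
  have hL0 : (0:ℝ) < L := lt_of_lt_of_le one_pos hL
  set S := L ^ ((1:ℝ)/2) with hSdef
  have hS0 : (0:ℝ) < S := Real.rpow_pos_of_pos hL0 _
  have hfre : (0:ℝ) < μf.re := lt_of_lt_of_le (by positivity) hkf
  have hsre : (0:ℝ) < μs.re := lt_of_lt_of_le hm hms
  have h32 : L ^ (-(3:ℝ)/2) * S = L⁻¹ := by
    rw [hSdef, ← Real.rpow_add hL0, show -(3:ℝ)/2 + (1:ℝ)/2 = -1 by norm_num,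
      Real.rpow_neg_one]
  have h32le : L ^ (-(3:ℝ)/2) ≤ L⁻¹ := by
    rw [← Real.rpow_neg_one L]
    exact Real.rpow_le_rpow_of_exponent_le hL (by norm_num)
  have hann := norm_nonneg a
  have hbnn := norm_nonneg b
  set g := fun y' => Gint a b μs μf x y' with hg
  -- the two kink points form a null set
  have hnull : volume ({x, 1 - x} : Set ℝ) = 0 :=
    ((Set.countable_singleton (1 - x)).insert x).measure_zero volume
  have hae : ∀ᵐ y : ℝ ∂volume, y ≠ x ∧ y ≠ 1 - x := by
    have h := hnull
    rw [← compl_mem_ae_iff] at h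
    filter_upwards [h] with y hy
    simp only [Set.mem_compl_iff, Set.mem_insert_iff, Set.mem_singleton_iff, not_or] at hy
    exact hy
  -- zeroth order
  have hI0 : (∫ y in (0:ℝ)..1, ‖Gint a b μs μf x y‖)
      ≤ 2 * ‖a‖ + 2 * ‖b‖ := by
    have hcont : Continuous fun y => ‖Gint a b μs μf x y‖ :=
      continuous_norm.comp (continuous_Gint a b μs μf x)
    calc (∫ y in (0:ℝ)..1, ‖Gint a b μs μf x y‖)
        ≤ ∫ _y in (0:ℝ)..1, (2 * ‖a‖ + 2 * ‖b‖) :=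
          intervalIntegral.integral_mono_on zero_le_one (hcont.intervalIntegrable _ _)
            intervalIntegrable_const (fun y _ => abs_Gint_le hsre.le hfre.le a b x y)
      _ = 2 * ‖a‖ + 2 * ‖b‖ := by simp
  -- first order
  have hmeas1 : Measurable fun y => ‖deriv g y‖ :=
    continuous_norm.measurable.comp (measurable_deriv g)
  have hbound1 : ∀ᵐ y : ℝ ∂volume, ‖deriv g y‖
      ≤ 2 * (‖a‖ * ‖μf‖) + 2 * (‖b‖ * ‖μs‖) := by
    filter_upwards [hae] with y hy
    rw [hg, deriv_Gint a b μs μf x hy.1 hy.2]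
    exact abs_D1_le hsre.le hfre.le a b x y
  have hint1 : IntegrableOn (fun y => ‖deriv g y‖) (Set.Ioc (0:ℝ) 1) := by
    refine Integrable.mono'
      (integrable_const (2 * (‖a‖ * ‖μf‖)
        + 2 * (‖b‖ * ‖μs‖)))
      hmeas1.aestronglyMeasurable.restrict (ae_restrict_of_ae ?_)
    filter_upwards [hbound1] with y hy
    rwa [Real.norm_eq_abs, abs_of_nonneg (norm_nonneg _)]
  have hI1 : (∫ y in (0:ℝ)..1, ‖deriv g y‖)
      ≤ 2 * (‖a‖ * ‖μf‖) + 2 * (‖b‖ * ‖μs‖) := by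
    rw [intervalIntegral.integral_of_le zero_le_one]
    calc (∫ y in Set.Ioc (0:ℝ) 1, ‖deriv g y‖)
        ≤ ∫ _y in Set.Ioc (0:ℝ) 1, (2 * (‖a‖ * ‖μf‖)
            + 2 * (‖b‖ * ‖μs‖)) :=
          integral_mono_ae hint1 (integrable_const _) (ae_restrict_of_ae hbound1)
      _ = _ := by simp
  -- second order
  have hmeas2 : Measurable fun y => ‖deriv (deriv g) y‖ :=
    continuous_norm.measurable.comp (measurable_deriv (deriv g))
  have hB2cont : Continuous fun y : ℝ =>
      ‖a‖ * ‖μf‖ ^ 2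
          * (Real.exp (-μf.re * |x - y|) + Real.exp (-μf.re * |1 - x - y|))
        + ‖b‖ * ‖μs‖ ^ 2
          * (Real.exp (-μs.re * |x - y|) + Real.exp (-μs.re * |1 - x - y|)) := by fun_prop
  have hbound2 : ∀ᵐ y : ℝ ∂volume, ‖deriv (deriv g) y‖
      ≤ ‖a‖ * ‖μf‖ ^ 2
          * (Real.exp (-μf.re * |x - y|) + Real.exp (-μf.re * |1 - x - y|))
        + ‖b‖ * ‖μs‖ ^ 2
          * (Real.exp (-μs.re * |x - y|) + Real.exp (-μs.re * |1 - x - y|)) := by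
    filter_upwards [hae] with y hy
    rw [hg, deriv2_Gint a b μs μf x hy.1 hy.2]
    exact abs_D2_le a b μs μf x y
  have hB2int : IntegrableOn (fun y : ℝ =>
      ‖a‖ * ‖μf‖ ^ 2
          * (Real.exp (-μf.re * |x - y|) + Real.exp (-μf.re * |1 - x - y|))
        + ‖b‖ * ‖μs‖ ^ 2
          * (Real.exp (-μs.re * |x - y|) + Real.exp (-μs.re * |1 - x - y|)))
      (Set.Ioc (0:ℝ) 1) :=
    (intervalIntegrable_iff_integrableOn_Ioc_of_le zero_le_one).1
      (hB2cont.intervalIntegrable _ _)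
  have hint2 : IntegrableOn (fun y => ‖deriv (deriv g) y‖) (Set.Ioc (0:ℝ) 1) := by
    refine Integrable.mono' hB2int hmeas2.aestronglyMeasurable.restrict (ae_restrict_of_ae ?_)
    filter_upwards [hbound2] with y hy
    rwa [Real.norm_eq_abs, abs_of_nonneg (norm_nonneg _)]
  have hJ1 : (∫ y in (0:ℝ)..1, Real.exp (-μf.re * |x - y|)) ≤ 2 / μf.re :=
    integral_exp_abs_le hfre hx0 hx1
  have hJ2 : (∫ y in (0:ℝ)..1, Real.exp (-μf.re * |1 - x - y|)) ≤ 2 / μf.re :=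
    integral_exp_abs_le hfre (by linarith) (by linarith)
  have hJ3 : (∫ y in (0:ℝ)..1, Real.exp (-μs.re * |x - y|)) ≤ 2 / μs.re :=
    integral_exp_abs_le hsre hx0 hx1
  have hJ4 : (∫ y in (0:ℝ)..1, Real.exp (-μs.re * |1 - x - y|)) ≤ 2 / μs.re :=
    integral_exp_abs_le hsre (by linarith) (by linarith)
  have hi1 : IntervalIntegrable (fun y : ℝ => Real.exp (-μf.re * |x - y|)) volume 0 1 :=
    (by fun_prop : Continuous fun y : ℝ => Real.exp (-μf.re * |x - y|)).intervalIntegrable _ _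
  have hi2 : IntervalIntegrable (fun y : ℝ => Real.exp (-μf.re * |1 - x - y|)) volume 0 1 :=
    (by fun_prop : Continuous fun y : ℝ => Real.exp (-μf.re * |1 - x - y|)).intervalIntegrable _ _
  have hi3 : IntervalIntegrable (fun y : ℝ => Real.exp (-μs.re * |x - y|)) volume 0 1 :=
    (by fun_prop : Continuous fun y : ℝ => Real.exp (-μs.re * |x - y|)).intervalIntegrable _ _
  have hi4 : IntervalIntegrable (fun y : ℝ => Real.exp (-μs.re * |1 - x - y|)) volume 0 1 :=
    (by fun_prop : Continuous fun y : ℝ => Real.exp (-μs.re * |1 - x - y|)).intervalIntegrable _ _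
  have hIB2 : (∫ y in (0:ℝ)..1,
      (‖a‖ * ‖μf‖ ^ 2
          * (Real.exp (-μf.re * |x - y|) + Real.exp (-μf.re * |1 - x - y|))
        + ‖b‖ * ‖μs‖ ^ 2
          * (Real.exp (-μs.re * |x - y|) + Real.exp (-μs.re * |1 - x - y|))))
      ≤ ‖a‖ * ‖μf‖ ^ 2 * (4 / μf.re)
        + ‖b‖ * ‖μs‖ ^ 2 * (4 / μs.re) := by
    rw [intervalIntegral.integral_add
        (((hi1.add hi2)).const_mul _) (((hi3.add hi4)).const_mul _),
      intervalIntegral.integral_const_mul, intervalIntegral.integral_const_mul,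
      intervalIntegral.integral_add hi1 hi2, intervalIntegral.integral_add hi3 hi4]
    have h4f : (∫ y in (0:ℝ)..1, Real.exp (-μf.re * |x - y|))
        + (∫ y in (0:ℝ)..1, Real.exp (-μf.re * |1 - x - y|)) ≤ 4 / μf.re := by
      have : (2:ℝ) / μf.re + 2 / μf.re = 4 / μf.re := by ring
      linarith
    have h4s : (∫ y in (0:ℝ)..1, Real.exp (-μs.re * |x - y|))
        + (∫ y in (0:ℝ)..1, Real.exp (-μs.re * |1 - x - y|)) ≤ 4 / μs.re := by
      have : (2:ℝ) / μs.re + 2 / μs.re = 4 / μs.re := by ring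
      linarith
    exact add_le_add (mul_le_mul_of_nonneg_left h4f (by positivity))
      (mul_le_mul_of_nonneg_left h4s (by positivity))
  have hI2 : (∫ y in (0:ℝ)..1, ‖deriv (deriv g) y‖)
      ≤ ‖a‖ * ‖μf‖ ^ 2 * (4 / μf.re)
        + ‖b‖ * ‖μs‖ ^ 2 * (4 / μs.re) := by
    refine le_trans ?_ hIB2
    rw [intervalIntegral.integral_of_le zero_le_one,
      intervalIntegral.integral_of_le zero_le_one]
    exact integral_mono_ae hint2 hB2int (ae_restrict_of_ae hbound2)
  -- arithmetic
  have hT0 : 2 * ‖a‖ + 2 * ‖b‖ ≤ 4 * C₀ * L⁻¹ := by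
    have h1 : ‖a‖ ≤ C₀ * L⁻¹ :=
      ha.trans (mul_le_mul_of_nonneg_left h32le hC₀.le)
    linarith
  have hT1 : 2 * (‖a‖ * ‖μf‖) + 2 * (‖b‖ * ‖μs‖)
      ≤ 2 * C₀ * (K + M) * L⁻¹ := by
    have h1 : ‖a‖ * ‖μf‖ ≤ (C₀ * L ^ (-(3:ℝ)/2)) * (K * S) :=
      mul_le_mul ha hKf (norm_nonneg _) (by positivity)
    have h1' : (C₀ * L ^ (-(3:ℝ)/2)) * (K * S) = C₀ * K * L⁻¹ := by
      rw [show (C₀ * L ^ (-(3:ℝ)/2)) * (K * S) = C₀ * K * (L ^ (-(3:ℝ)/2) * S) by ring, h32]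
    have h2 : ‖b‖ * ‖μs‖ ≤ (C₀ * L⁻¹) * M :=
      mul_le_mul hb hMs (norm_nonneg _) (by positivity)
    rw [h1'] at h1
    linarith
  have hT2 : ‖a‖ * ‖μf‖ ^ 2 * (4 / μf.re)
      + ‖b‖ * ‖μs‖ ^ 2 * (4 / μs.re)
      ≤ (4 * C₀ * K ^ 2 / k + 4 * C₀ * M ^ 2 / m) * L⁻¹ := by
    have hf1 : ‖a‖ * ‖μf‖ ^ 2
        ≤ (C₀ * L ^ (-(3:ℝ)/2)) * (K * S) ^ 2 :=
      mul_le_mul ha (pow_le_pow_left₀ (norm_nonneg _) hKf 2) (by positivity)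
        (by positivity)
    have hf2 : 4 / μf.re ≤ 4 / (k * S) := by
      apply div_le_div_of_nonneg_left (by norm_num) (by positivity) hkf
    have hfprod : ‖a‖ * ‖μf‖ ^ 2 * (4 / μf.re)
        ≤ (C₀ * L ^ (-(3:ℝ)/2)) * (K * S) ^ 2 * (4 / (k * S)) :=
      mul_le_mul hf1 hf2 (by positivity) (by positivity)
    have hfval : (C₀ * L ^ (-(3:ℝ)/2)) * (K * S) ^ 2 * (4 / (k * S))
        = 4 * C₀ * K ^ 2 / k * (L ^ (-(3:ℝ)/2) * S) := by
      rw [show (C₀ * L ^ (-(3:ℝ)/2)) * (K * S) ^ 2 * (4 / (k * S))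
          = 4 * C₀ * K ^ 2 / k * (L ^ (-(3:ℝ)/2) * (S * (S * S⁻¹))) by ring,
        mul_inv_cancel₀ hS0.ne', mul_one]
    rw [hfval, h32] at hfprod
    have hs1 : ‖b‖ * ‖μs‖ ^ 2 ≤ (C₀ * L⁻¹) * M ^ 2 :=
      mul_le_mul hb (pow_le_pow_left₀ (norm_nonneg _) hMs 2) (by positivity)
        (by positivity)
    have hs2 : 4 / μs.re ≤ 4 / m := by
      apply div_le_div_of_nonneg_left (by norm_num) (by positivity) hms
    have hsprod : ‖b‖ * ‖μs‖ ^ 2 * (4 / μs.re)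
        ≤ (C₀ * L⁻¹) * M ^ 2 * (4 / m) :=
      mul_le_mul hs1 hs2 (by positivity) (by positivity)
    have hsval : (C₀ * L⁻¹) * M ^ 2 * (4 / m) = 4 * C₀ * M ^ 2 / m * L⁻¹ := by
      ring
    rw [hsval] at hsprod
    linarith
  linarith [hI0, hI1, hI2, hT0, hT1, hT2]
end

section
/- Energy estimate for large wavenumbers: let U_s ∈ C²([0,1];ℝ) and ν > 0. Then there exists α₁ > 0, depending only on ν and on sup_{y∈[0,1]} |U_s'(y)|, such that for every α ≥ α₁, every c ∈ ℂ, and every ψ ∈ C⁴([0,1];ℂ) with ψ not identically zero, satisfying the boundary conditions ψ(0) = ψ'(0) = ψ(1) = ψ'(1) = 0 and Orr_{c,α,ν}(ψ) = 0 on [0,1], one has Im c < 0; equivalently, the corresponding eigenvalue λ = −iαc of the linearized Navier–Stokes operator satisfies Re λ < 0. -/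
open Set
open MeasureTheory intervalIntegral

private lemma conj_mul_self' (z : ℂ) : (starRingEnd ℂ) z * z = ((‖z‖^2 : ℝ) : ℂ) := by
  rw [mul_comm, Complex.mul_conj, Complex.normSq_eq_norm_sq]

/-- Integration by parts on `[0,1]` with vanishing boundary terms. -/
private lemma ibp01 {u v u' v' : ℝ → ℂ} (hu : ∀ x, HasDerivAt u (u' x) x)
    (hv : ∀ x, HasDerivAt v (v' x) x) (hcu' : Continuous u') (hcv' : Continuous v')
    (hb0 : u 0 * v 0 = 0) (hb1 : u 1 * v 1 = 0) :
    ∫ x in (0:ℝ)..1, u x * v' x = - ∫ x in (0:ℝ)..1, u' x * v x := by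
  rw [intervalIntegral.integral_mul_deriv_eq_deriv_mul (fun x _ => hu x) (fun x _ => hv x)
    (hcu'.intervalIntegrable 0 1) (hcv'.intervalIntegrable 0 1), hb0, hb1]
  ring


private lemma isplit {f g : ℝ → ℂ} (hf : Continuous f) (hg : Continuous g) :
    (∫ y in (0:ℝ)..1, (f y + g y)) = (∫ y in (0:ℝ)..1, f y) + ∫ y in (0:ℝ)..1, g y :=
  intervalIntegral.integral_add (hf.intervalIntegrable 0 1) (hg.intervalIntegrable 0 1)

private lemma isplitR {f g : ℝ → ℝ} (hf : Continuous f) (hg : Continuous g) :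
    (∫ y in (0:ℝ)..1, (f y + g y)) = (∫ y in (0:ℝ)..1, f y) + ∫ y in (0:ℝ)..1, g y :=
  intervalIntegral.integral_add (hf.intervalIntegrable 0 1) (hg.intervalIntegrable 0 1)


/-- The Orr–Sommerfeld operator `Orr_{c,α,ν}` acting on a stream function `ψ`:
`α (U_s - c)(ψ'' - α² ψ) - α U_s'' ψ + i ν (ψ'''' - 2α² ψ'' + α⁴ ψ)`. -/
noncomputable def OrrSommerfeld (Us : ℝ → ℝ) (α : ℝ) (c : ℂ) (ν : ℝ) (ψ : ℝ → ℂ) (y : ℝ) : ℂ :=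
  (α : ℂ) * ((Us y : ℂ) - c) * (iteratedDeriv 2 ψ y - (α : ℂ) ^ 2 * ψ y)
    - (α : ℂ) * ((deriv (deriv Us) y : ℝ) : ℂ) * ψ y
    + Complex.I * (ν : ℂ) *
      (iteratedDeriv 4 ψ y - 2 * (α : ℂ) ^ 2 * iteratedDeriv 2 ψ y + (α : ℂ) ^ 4 * ψ y)

set_option maxHeartbeats 1600000 in
/-- Energy estimate for large wavenumbers: for `α` large enough (depending only on `ν` and
`sup |U_s'|`), every nonzero solution of the Orr–Sommerfeld eigenvalue problem with Dirichlet
boundary conditions has `Im c < 0`, i.e. the eigenvalue `λ = -iαc` satisfies `Re λ < 0`. -/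
theorem energy_estimate_large_wavenumber (Us : ℝ → ℝ) (hUs : ContDiff ℝ 2 Us)
    (ν : ℝ) (hν : 0 < ν) :
    ∃ α₁ > (0:ℝ), ∀ α : ℝ, α₁ ≤ α → ∀ c : ℂ, ∀ ψ : ℝ → ℂ, ContDiff ℝ 4 ψ →
      (∃ y ∈ Icc (0:ℝ) 1, ψ y ≠ 0) →
      ψ 0 = 0 → deriv ψ 0 = 0 → ψ 1 = 0 → deriv ψ 1 = 0 →
      (∀ y ∈ Icc (0:ℝ) 1, OrrSommerfeld Us α c ν ψ y = 0) →
      c.im < 0 ∧ (-Complex.I * (α : ℂ) * c).re < 0 := by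
  -- bound on the derivative of Us
  obtain ⟨M0, hM0⟩ := isCompact_Icc.exists_bound_of_continuousOn
    ((hUs.continuous_deriv (by norm_num)).continuousOn (s := Icc (0:ℝ) 1))
  set M : ℝ := max M0 0 with hMdef
  have hMnn : 0 ≤ M := le_max_right _ _
  have hM : ∀ y ∈ Icc (0:ℝ) 1, |deriv Us y| ≤ M := fun y hy =>
    le_trans (hM0 y hy) (le_max_left _ _)
  refine ⟨M / ν + 1, by positivity, ?_⟩
  intro α hα c ψ hψ hne h0 h0' h1 h1' heq
  have hα1 : (1:ℝ) ≤ α := le_trans (by nlinarith [div_nonneg hMnn hν.le]) hα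
  have hαpos : (0:ℝ) < α := lt_of_lt_of_le one_pos hα1
  -- derivatives of ψ
  set ψ1 := deriv ψ with hψ1def
  set ψ2 := deriv ψ1 with hψ2def
  set ψ3 := deriv ψ2 with hψ3def
  set ψ4 := deriv ψ3 with hψ4def
  have hc3 : ContDiff ℝ 3 ψ1 :=
    (contDiff_succ_iff_deriv.mp (by exact_mod_cast hψ : ContDiff ℝ (3+1) ψ)).2.2
  have hc2 : ContDiff ℝ 2 ψ2 :=
    (contDiff_succ_iff_deriv.mp (by exact_mod_cast hc3 : ContDiff ℝ (2+1) ψ1)).2.2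
  have hc1 : ContDiff ℝ 1 ψ3 :=
    (contDiff_succ_iff_deriv.mp (by exact_mod_cast hc2 : ContDiff ℝ (1+1) ψ2)).2.2
  have cψ : Continuous ψ := hψ.continuous
  have cψ1 : Continuous ψ1 := hc3.continuous
  have cψ2 : Continuous ψ2 := hc2.continuous
  have cψ3 : Continuous ψ3 := hc1.continuous
  have cψ4 : Continuous ψ4 := hc1.continuous_deriv le_rfl
  have hd : ∀ x, HasDerivAt ψ (ψ1 x) x := fun x =>
    ((hψ.differentiable (by norm_num)) x).hasDerivAt
  have hd1 : ∀ x, HasDerivAt ψ1 (ψ2 x) x := fun x =>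
    ((hc3.differentiable (by norm_num)) x).hasDerivAt
  have hd2 : ∀ x, HasDerivAt ψ2 (ψ3 x) x := fun x =>
    ((hc2.differentiable (by norm_num)) x).hasDerivAt
  have hd3 : ∀ x, HasDerivAt ψ3 (ψ4 x) x := fun x =>
    ((hc1.differentiable (by norm_num)) x).hasDerivAt
  -- conjugates
  set φ : ℝ → ℂ := fun y => (starRingEnd ℂ) (ψ y) with hφdef
  set φ1 : ℝ → ℂ := fun y => (starRingEnd ℂ) (ψ1 y) with hφ1def
  set φ2 : ℝ → ℂ := fun y => (starRingEnd ℂ) (ψ2 y) with hφ2def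
  have cφ : Continuous φ := cψ.star
  have cφ1 : Continuous φ1 := cψ1.star
  have cφ2 : Continuous φ2 := cψ2.star
  have hdφ : ∀ x, HasDerivAt φ (φ1 x) x := fun x => (hd x).star
  have hdφ1 : ∀ x, HasDerivAt φ1 (φ2 x) x := fun x => (hd1 x).star
  have hφ0 : φ 0 = 0 := by simp [hφdef, h0]
  have hφ1at1 : φ 1 = 0 := by simp [hφdef, h1]
  have hφ10 : φ1 0 = 0 := by simp [hφ1def, h0']
  have hφ11 : φ1 1 = 0 := by simp [hφ1def, h1']
  -- real quantities
  set A : ℝ := ∫ y in (0:ℝ)..1, ‖ψ y‖^2 with hAdef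
  set B : ℝ := ∫ y in (0:ℝ)..1, ‖ψ1 y‖^2 with hBdef
  set C : ℝ := ∫ y in (0:ℝ)..1, ‖ψ2 y‖^2 with hCdef
  have hAnn : 0 ≤ A := intervalIntegral.integral_nonneg zero_le_one (fun y _ => by positivity)
  have hBnn : 0 ≤ B := intervalIntegral.integral_nonneg zero_le_one (fun y _ => by positivity)
  have hCnn : 0 ≤ C := intervalIntegral.integral_nonneg zero_le_one (fun y _ => by positivity)
  -- A is positive
  have hA : 0 < A := by
    obtain ⟨y0, hy0, hy0ne⟩ := hne
    have hy0mem : y0 ∈ Ioo (0:ℝ) 1 := by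
      constructor
      · rcases eq_or_lt_of_le hy0.1 with h | h
        · exact absurd (by rw [← h]; exact h0) hy0ne
        · exact h
      · rcases eq_or_lt_of_le hy0.2 with h | h
        · exact absurd (by rw [h]; exact h1) hy0ne
        · exact h
    rw [hAdef]
    refine (intervalIntegral.integral_pos_iff_support_of_nonneg_ae'
      (Filter.Eventually.of_forall (fun y => sq_nonneg _))
      ((cψ.norm.pow 2).intervalIntegrable 0 1)).2 ⟨zero_lt_one, ?_⟩
    have hopen : IsOpen ({y | ψ y ≠ 0} ∩ Ioo 0 1) :=
      (isOpen_compl_singleton.preimage cψ).inter isOpen_Ioo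
    refine lt_of_lt_of_le (hopen.measure_pos volume ⟨y0, hy0ne, hy0mem⟩) (measure_mono ?_)
    rintro z ⟨hz1, hz2⟩
    refine ⟨?_, Ioo_subset_Ioc_self hz2⟩
    simpa [Function.mem_support] using pow_ne_zero 2 (norm_ne_zero_iff.mpr hz1)
  -- integration by parts identities
  have hI1 : (∫ y in (0:ℝ)..1, φ y * ψ2 y) = -((B : ℝ) : ℂ) := by
    rw [ibp01 hdφ hd1 cφ1 cψ2 (by rw [hφ0]; ring) (by rw [hφ1at1]; ring)]
    have hcms : ∀ y : ℝ, φ1 y * ψ1 y = ((‖ψ1 y‖^2 : ℝ) : ℂ) := fun y => conj_mul_self' _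
    simp only [hcms]
    rw [intervalIntegral.integral_ofReal]
  have hI2 : (∫ y in (0:ℝ)..1, φ y * ψ4 y) = ((C : ℝ) : ℂ) := by
    rw [ibp01 hdφ hd3 cφ1 cψ4 (by rw [hφ0]; ring) (by rw [hφ1at1]; ring),
      ibp01 hdφ1 hd2 cφ2 cψ3 (by rw [hφ10]; ring) (by rw [hφ11]; ring), neg_neg]
    have hcms : ∀ y : ℝ, φ2 y * ψ2 y = ((‖ψ2 y‖^2 : ℝ) : ℂ) := fun y => conj_mul_self' _
    simp only [hcms]
    rw [intervalIntegral.integral_ofReal]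
  -- derivative facts for Us
  have hUsd : ∀ x, HasDerivAt Us (deriv Us x) x := fun x =>
    ((hUs.differentiable (by norm_num)) x).hasDerivAt
  have cUs : Continuous Us := hUs.continuous
  have cU' : Continuous (deriv Us) := hUs.continuous_deriv (by norm_num)
  have cU'' : Continuous (deriv (deriv Us)) :=
    ((contDiff_succ_iff_deriv.mp (by exact_mod_cast hUs : ContDiff ℝ (1+1) Us)).2.2).continuous_deriv
      le_rfl
  -- key complex integrals
  set P1 : ℂ := ∫ y in (0:ℝ)..1, (Us y : ℂ) * (φ y * ψ2 y) with hP1def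
  set P7 : ℂ := ∫ y in (0:ℝ)..1, ((deriv Us y : ℝ) : ℂ) * (φ y * ψ1 y) with hP7def
  set P9 : ℂ := ∫ y in (0:ℝ)..1, (Us y : ℂ) * (φ1 y * ψ1 y) with hP9def
  -- Im P1 = - Im P7
  have hI3 : P7 + (P9 + P1) = 0 := by
    have hF : ∀ y ∈ uIcc (0:ℝ) 1, HasDerivAt (fun y => (Us y : ℂ) * (φ y * ψ1 y))
        (((deriv Us y : ℝ) : ℂ) * (φ y * ψ1 y) + (Us y : ℂ) * (φ1 y * ψ1 y + φ y * ψ2 y)) y :=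
      fun y _ => (hUsd y).ofReal_comp.mul ((hdφ y).mul (hd1 y))
    have hint : IntervalIntegrable (fun y => ((deriv Us y : ℝ) : ℂ) * (φ y * ψ1 y)
        + (Us y : ℂ) * (φ1 y * ψ1 y + φ y * ψ2 y)) volume 0 1 :=
      Continuous.intervalIntegrable (by fun_prop) 0 1
    have h := intervalIntegral.integral_eq_sub_of_hasDerivAt hF hint
    rw [h0', h1'] at h
    simp only [mul_zero, zero_mul, sub_zero] at h
    rw [isplit (by fun_prop) (by fun_prop)] at h
    have h2 : (∫ y in (0:ℝ)..1, (Us y : ℂ) * (φ1 y * ψ1 y + φ y * ψ2 y))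
        = P9 + P1 := by
      have : ∀ y : ℝ, (Us y : ℂ) * (φ1 y * ψ1 y + φ y * ψ2 y)
          = (Us y : ℂ) * (φ1 y * ψ1 y) + (Us y : ℂ) * (φ y * ψ2 y) := fun y => by ring
      simp only [this]
      rw [isplit (by fun_prop) (by fun_prop), hP9def, hP1def]
    rw [h2] at h
    exact h
  -- P9 is real
  have hP9im : P9.im = 0 := by
    have : ∀ y : ℝ, (Us y : ℂ) * (φ1 y * ψ1 y) = ((Us y * ‖ψ1 y‖^2 : ℝ) : ℂ) := fun y => by
      rw [conj_mul_self']; push_cast; ring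
    rw [hP9def]
    simp only [this]
    rw [intervalIntegral.integral_ofReal, Complex.ofReal_im]
  -- further real quantities
  set G2 : ℝ := ∫ y in (0:ℝ)..1, Us y * ‖ψ y‖^2 with hG2def
  set G5 : ℝ := ∫ y in (0:ℝ)..1, (deriv (deriv Us) y) * ‖ψ y‖^2 with hG5def
  -- iterated derivatives
  have hit2 : iteratedDeriv 2 ψ = ψ2 := by
    rw [iteratedDeriv_succ, iteratedDeriv_one, ← hψ1def, ← hψ2def]
  have hit4 : iteratedDeriv 4 ψ = ψ4 := by
    rw [show (4:ℕ) = 3+1 from rfl, iteratedDeriv_succ, show (3:ℕ) = 2+1 from rfl,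
      iteratedDeriv_succ, iteratedDeriv_succ, iteratedDeriv_one,
      ← hψ1def, ← hψ2def, ← hψ3def, ← hψ4def]
  -- the integrated Orr–Sommerfeld equation
  have hzero : (∫ y in (0:ℝ)..1, OrrSommerfeld Us α c ν ψ y * φ y) = 0 := by
    rw [intervalIntegral.integral_congr (g := fun _ => (0:ℂ))
      (fun y hy => by
        rw [Set.uIcc_of_le zero_le_one] at hy
        simp [heq y hy]),
      intervalIntegral.integral_zero]
  have hexp : ∀ y : ℝ, OrrSommerfeld Us α c ν ψ y * φ y =
      (α : ℂ) * ((Us y : ℂ) * (φ y * ψ2 y))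
      + (-((α : ℂ) * c) - 2 * Complex.I * (ν : ℂ) * (α : ℂ)^2) * (φ y * ψ2 y)
      + ((α : ℂ)^3 * c + Complex.I * (ν : ℂ) * (α : ℂ)^4) * ((‖ψ y‖^2 : ℝ) : ℂ)
      + (-((α : ℂ)^3)) * ((Us y : ℂ) * ((‖ψ y‖^2 : ℝ) : ℂ))
      + (-(α : ℂ)) * (((deriv (deriv Us) y : ℝ) : ℂ) * ((‖ψ y‖^2 : ℝ) : ℂ))
      + (Complex.I * (ν : ℂ)) * (φ y * ψ4 y) := by
    intro y
    have hz : ((‖ψ y‖^2 : ℝ) : ℂ) = φ y * ψ y := (conj_mul_self' (ψ y)).symm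
    rw [hz]
    simp only [OrrSommerfeld, hit2, hit4]
    ring
  have hIA : (∫ y in (0:ℝ)..1, ((‖ψ y‖^2 : ℝ) : ℂ)) = ((A : ℝ) : ℂ) := by
    rw [intervalIntegral.integral_ofReal, ← hAdef]
  have hIG2 : (∫ y in (0:ℝ)..1, (Us y : ℂ) * ((‖ψ y‖^2 : ℝ) : ℂ)) = ((G2 : ℝ) : ℂ) := by
    simp only [← Complex.ofReal_mul]
    rw [intervalIntegral.integral_ofReal, ← hG2def]
  have hIG5 : (∫ y in (0:ℝ)..1, ((deriv (deriv Us) y : ℝ) : ℂ) * ((‖ψ y‖^2 : ℝ) : ℂ))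
      = ((G5 : ℝ) : ℂ) := by
    simp only [← Complex.ofReal_mul]
    rw [intervalIntegral.integral_ofReal, ← hG5def]
  have hsplit : (0:ℂ) =
      (α : ℂ) * P1
      + (-((α : ℂ) * c) - 2 * Complex.I * (ν : ℂ) * (α : ℂ)^2) * (-((B : ℝ) : ℂ))
      + ((α : ℂ)^3 * c + Complex.I * (ν : ℂ) * (α : ℂ)^4) * ((A : ℝ) : ℂ)
      + (-((α : ℂ)^3)) * ((G2 : ℝ) : ℂ)
      + (-(α : ℂ)) * ((G5 : ℝ) : ℂ)
      + (Complex.I * (ν : ℂ)) * ((C : ℝ) : ℂ) := by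
    calc (0:ℂ) = ∫ y in (0:ℝ)..1, OrrSommerfeld Us α c ν ψ y * φ y := hzero.symm
      _ = _ := by
        rw [intervalIntegral.integral_congr (g := fun y =>
          (α : ℂ) * ((Us y : ℂ) * (φ y * ψ2 y))
          + (-((α : ℂ) * c) - 2 * Complex.I * (ν : ℂ) * (α : ℂ)^2) * (φ y * ψ2 y)
          + ((α : ℂ)^3 * c + Complex.I * (ν : ℂ) * (α : ℂ)^4) * ((‖ψ y‖^2 : ℝ) : ℂ)
          + (-((α : ℂ)^3)) * ((Us y : ℂ) * ((‖ψ y‖^2 : ℝ) : ℂ))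
          + (-(α : ℂ)) * (((deriv (deriv Us) y : ℝ) : ℂ) * ((‖ψ y‖^2 : ℝ) : ℂ))
          + (Complex.I * (ν : ℂ)) * (φ y * ψ4 y)) (fun y _ => hexp y)]
        rw [isplit (by fun_prop) (by fun_prop), isplit (by fun_prop) (by fun_prop),
          isplit (by fun_prop) (by fun_prop), isplit (by fun_prop) (by fun_prop),
          isplit (by fun_prop) (by fun_prop)]
        rw [intervalIntegral.integral_const_mul, intervalIntegral.integral_const_mul,
          intervalIntegral.integral_const_mul, intervalIntegral.integral_const_mul,
          intervalIntegral.integral_const_mul, intervalIntegral.integral_const_mul]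
        rw [hI1, hI2, hIA, hIG2, hIG5, ← hP1def]
  have hIm := congrArg Complex.im hsplit
  simp only [Complex.add_im, Complex.mul_im, Complex.mul_re, Complex.sub_im, Complex.sub_re,
    Complex.neg_im, Complex.neg_re, Complex.I_re, Complex.I_im, Complex.ofReal_re,
    Complex.ofReal_im, Complex.zero_im, ← Complex.ofReal_pow, Complex.ofReal_ofNat,
    Complex.re_ofNat, Complex.im_ofNat] at hIm
  ring_nf at hIm
  have hP1im : P1.im = - P7.im := by
    have h := congrArg Complex.im hI3
    simp only [Complex.add_im, Complex.zero_im, hP9im] at h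
    linarith
  have habs : |P7.im| ≤ M / (2*α) * (B + α^2 * A) := by
    have h1 : |P7.im| ≤ ‖P7‖ := by
      exact Complex.abs_im_le_norm P7
    have h2 : ‖P7‖ ≤ ∫ y in (0:ℝ)..1, ‖((deriv Us y : ℝ) : ℂ) * (φ y * ψ1 y)‖ := by
      rw [hP7def]; exact intervalIntegral.norm_integral_le_integral_norm zero_le_one
    have h3 : (∫ y in (0:ℝ)..1, ‖((deriv Us y : ℝ) : ℂ) * (φ y * ψ1 y)‖)
        ≤ ∫ y in (0:ℝ)..1, M / (2*α) * (‖ψ1 y‖^2 + α^2 * ‖ψ y‖^2) := by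
      apply intervalIntegral.integral_mono_on zero_le_one
        (Continuous.intervalIntegrable (by fun_prop) 0 1)
        (Continuous.intervalIntegrable (by fun_prop) 0 1)
      intro y hy
      have hnorm : ‖((deriv Us y : ℝ) : ℂ) * (φ y * ψ1 y)‖
          = |deriv Us y| * (‖ψ y‖ * ‖ψ1 y‖) := by
        simp [norm_mul, Complex.norm_real, Real.norm_eq_abs, hφdef, Complex.norm_conj]
      rw [hnorm, div_mul_eq_mul_div, le_div_iff₀ (by positivity)]
      have hMy := hM y hy
      nlinarith [abs_nonneg (deriv Us y), norm_nonneg (ψ y), norm_nonneg (ψ1 y),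
        mul_nonneg (norm_nonneg (ψ y)) (norm_nonneg (ψ1 y)),
        mul_nonneg hMnn (sq_nonneg (‖ψ1 y‖ - α * ‖ψ y‖)),
        mul_nonneg (mul_nonneg (sub_nonneg.mpr hMy)
          (mul_nonneg (norm_nonneg (ψ y)) (norm_nonneg (ψ1 y)))) hαpos.le]
    have h4 : (∫ y in (0:ℝ)..1, M / (2*α) * (‖ψ1 y‖^2 + α^2 * ‖ψ y‖^2))
        = M / (2*α) * (B + α^2 * A) := by
      rw [intervalIntegral.integral_const_mul, isplitR (by fun_prop) (by fun_prop),
        intervalIntegral.integral_const_mul, ← hBdef, ← hAdef]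
    linarith
  have hQ : 0 < B + α^2 * A := by nlinarith [mul_pos (pow_pos hαpos 2) hA, hBnn]
  have hkey : α * c.im * (B + α^2*A) ≤ (M/2 - ν*α^2) * (B + α^2*A) := by
    have h5 : α * P7.im ≤ α * |P7.im| := mul_le_mul_of_nonneg_left (le_abs_self _) hαpos.le
    have h6 : α * (M / (2*α) * (B + α^2*A)) = M/2 * (B + α^2*A) := by
      field_simp
    have h6' : α * |P7.im| ≤ M/2 * (B + α^2*A) := by
      calc α * |P7.im| ≤ α * (M / (2*α) * (B + α^2*A)) :=
            mul_le_mul_of_nonneg_left habs hαpos.le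
        _ = M/2 * (B + α^2*A) := h6
    have h7 : ν*α^2*(B + α^2*A) ≤ ν*(C + 2*α^2*B + α^4*A) := by
      nlinarith [mul_nonneg hν.le hCnn, mul_nonneg (mul_nonneg hν.le (sq_nonneg α)) hBnn]
    nlinarith [hIm, hP1im, h5, h6', h7]
  have h8 : α * c.im ≤ M/2 - ν*α^2 := le_of_mul_le_mul_right hkey hQ
  have h9 : M/2 - ν*α^2 < 0 := by
    have h10 : ν * (M/ν + 1) ≤ ν * α := mul_le_mul_of_nonneg_left hα hν.le
    have h11 : ν * (M / ν + 1) = M + ν := by field_simp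
    nlinarith [mul_nonneg (mul_nonneg hν.le hαpos.le) (sub_nonneg.mpr hα1)]
  have hcim : c.im < 0 := by
    by_contra h
    push_neg at h
    nlinarith [mul_nonneg hαpos.le h]
  refine ⟨hcim, ?_⟩
  have hre : (-Complex.I * (α:ℂ) * c).re = α * c.im := by
    simp [Complex.mul_re, Complex.mul_im]
  rw [hre]
  exact mul_neg_of_pos_of_neg hαpos hcim
end

section
/- Asymptotic stability of the bifurcating periodic orbit: let ω ∈ ℝ, μ < 0, and c₁, c₃ ∈ ℂ with c₁_r := Re c₁ < 0, c₃_r := Re c₃ < 0, and set r = |μ|^{1/2}√(c₁_r/c₃_r). If A : [0,∞) → ℂ is differentiable, satisfies dA/dt = iωA + c₁μA + c₃A|A|² for all t ≥ 0, and A(0) ≠ 0, then |A(t)| → r as t → +∞. -/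
open Set Filter

/-- Right-hand side of the Hopf bifurcation normal form `iωA + c₁μA + c₃A|A|²`. -/
noncomputable def hopfRHS (ω μ : ℝ) (c₁ c₃ : ℂ) (z : ℂ) : ℂ :=
  Complex.I * (ω : ℂ) * z + c₁ * (μ : ℂ) * z + c₃ * z * ((‖z‖ : ℝ) : ℂ) ^ 2

private lemma hopf_re_key (ω μ : ℝ) (c₁ c₃ : ℂ) (z : ℂ) :
    (hopfRHS ω μ c₁ c₃ z).re * z.re + z.re * (hopfRHS ω μ c₁ c₃ z).re
      + ((hopfRHS ω μ c₁ c₃ z).im * z.im + z.im * (hopfRHS ω μ c₁ c₃ z).im)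
      = 2 * Complex.normSq z * (c₁.re * μ + c₃.re * Complex.normSq z) := by
  simp only [hopfRHS, ← Complex.ofReal_pow, Complex.sq_norm, Complex.add_re, Complex.add_im,
    Complex.mul_re, Complex.mul_im, Complex.I_re, Complex.I_im, Complex.ofReal_re,
    Complex.ofReal_im, Complex.normSq_apply]
  ring




/-- Asymptotic stability of the bifurcating periodic orbit: for `μ < 0`, every solution of
the Hopf normal form with nonzero initial data has modulus converging to the radius
`r = |μ|^{1/2} √(Re c₁ / Re c₃)` of the bifurcating circle. -/
theorem hopf_periodic_orbit_asymptotically_stable (ω μ : ℝ) (hμ : μ < 0) (c₁ c₃ : ℂ)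
    (h1 : c₁.re < 0) (h3 : c₃.re < 0) (A : ℝ → ℂ)
    (hA : ∀ t ∈ Set.Ici (0:ℝ),
      HasDerivWithinAt A (hopfRHS ω μ c₁ c₃ (A t)) (Set.Ici 0) t)
    (h0 : A 0 ≠ 0) :
    Filter.Tendsto (fun t => ‖A t‖) Filter.atTop
      (nhds (Real.sqrt |μ| * Real.sqrt (c₁.re / c₃.re))) := by
  have haμ : 0 < c₁.re * μ := mul_pos_of_neg_of_neg h1 hμ
  set u : ℝ → ℝ := fun t => Complex.normSq (A t) with hu_def
  have hu0 : 0 < u 0 := Complex.normSq_pos.mpr h0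
  set α : ℝ := 2 * (c₁.re * μ) with hα_def
  have hα : 0 < α := by positivity
  set L : ℝ := -c₃.re / (c₁.re * μ) with hL_def
  have hL : 0 < L := div_pos (neg_pos.mpr h3) haμ
  set cst : ℝ := 1 / u 0 - L with hc_def
  set v : ℝ → ℝ := fun t => L + cst * Real.exp (-α * t) with hv_def
  -- derivative of v
  have hv' : ∀ t : ℝ, HasDerivAt v (-α * (v t - L)) t := by
    intro t
    have hid : HasDerivAt (fun t : ℝ => -α * t) (-α) t := by
      simpa using (hasDerivAt_id t).const_mul (-α)
    have h2 := ((hid.exp).const_mul cst).const_add L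
    refine h2.congr_deriv (Eq.symm ?_)
    simp only [hv_def]
    ring
  -- positivity of v on [0,∞)
  have hvpos : ∀ t ∈ Set.Ici (0:ℝ), 0 < v t := by
    intro t ht
    rcases le_or_gt 0 cst with hc | hc
    · have : 0 ≤ cst * Real.exp (-α * t) := by positivity
      simp only [hv_def]; linarith
    · have hexple : Real.exp (-α * t) ≤ 1 := by
        apply Real.exp_le_one_iff.mpr
        have h0t : (0:ℝ) ≤ t := ht
        nlinarith
      have hge : cst * Real.exp (-α * t) ≥ cst * 1 :=
        mul_le_mul_of_nonpos_left hexple hc.le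
      have h1u : 0 < 1 / u 0 := by positivity
      have hLc : L + cst = 1 / u 0 := by simp [hc_def]
      have step : L + cst * 1 ≤ L + cst * Real.exp (-α * t) := add_le_add_right hge L
      rw [mul_one] at step
      have pos : 0 < L + cst := by rw [hLc]; exact h1u
      simp only [hv_def]
      exact lt_of_lt_of_le pos step
  -- derivative of u
  have hu' : ∀ t ∈ Set.Ici (0:ℝ),
      HasDerivWithinAt u (2 * u t * (c₁.re * μ + c₃.re * u t)) (Set.Ici 0) t := by
    intro t ht
    have hre : HasDerivWithinAt (fun t => (A t).re) (hopfRHS ω μ c₁ c₃ (A t)).re (Set.Ici 0) t :=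
      Complex.reCLM.hasFDerivAt.comp_hasDerivWithinAt t (hA t ht)
    have him : HasDerivWithinAt (fun t => (A t).im) (hopfRHS ω μ c₁ c₃ (A t)).im (Set.Ici 0) t :=
      Complex.imCLM.hasFDerivAt.comp_hasDerivWithinAt t (hA t ht)
    have h := (hre.mul hre).add (him.mul him)
    have heq : (fun t => (A t).re * (A t).re + (A t).im * (A t).im) = u := by
      funext s; simp [hu_def, Complex.normSq_apply]
    rw [show (((fun t => (A t).re) * fun t => (A t).re) + (fun t => (A t).im) * fun t => (A t).im) = u from heq] at h
    refine h.congr_deriv (Eq.symm ?_)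
    exact (hopf_re_key ω μ c₁ c₃ (A t)).symm
  -- the function h = u v - 1
  set h : ℝ → ℝ := fun t => u t * v t - 1 with hh_def
  have hh' : ∀ t ∈ Set.Ici (0:ℝ),
      HasDerivWithinAt h (2 * c₃.re * u t * h t) (Set.Ici 0) t := by
    intro t ht
    have := ((hu' t ht).mul (hv' t).hasDerivWithinAt).sub_const 1
    refine this.congr_deriv (Eq.symm ?_)
    simp only [hh_def]
    have hαL : α * L = -(2 * c₃.re) := by
      rw [hα_def, hL_def, mul_div_assoc', div_eq_iff haμ.ne']; ring
    linear_combination u t * v t * hα_def - u t * hαL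
  -- Gronwall: h ≡ 0 on [0,∞)
  have hzero : ∀ t ∈ Set.Ici (0:ℝ), h t = 0 := by
    intro T hT
    have hsub : Set.Icc (0:ℝ) T ⊆ Set.Ici 0 := Set.Icc_subset_Ici_self
    have hcont : ContinuousOn h (Set.Icc 0 T) := fun x hx =>
      ((hh' x (hsub hx)).mono hsub).continuousWithinAt
    have hucont : ContinuousOn u (Set.Icc 0 T) := fun x hx =>
      ((hu' x (hsub hx)).mono hsub).continuousWithinAt
    obtain ⟨C, hC⟩ := isCompact_Icc.exists_bound_of_continuousOn hucont
    have hCpos : 0 ≤ C := le_trans (norm_nonneg _) (hC 0 ⟨le_refl 0, hT⟩)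
    have h00 : ‖h 0‖ ≤ 0 := by
      have : h 0 = 0 := by
        simp only [hh_def, hv_def, hc_def, mul_zero, neg_zero, Real.exp_zero, mul_one]
        field_simp
        ring
      simp [this]
    have bound : ∀ x ∈ Set.Ico (0:ℝ) T,
        ‖2 * c₃.re * u x * h x‖ ≤ (2 * |c₃.re| * C) * ‖h x‖ + 0 := by
      intro x hx
      have hux : |u x| ≤ C := by
        have := hC x ⟨hx.1, hx.2.le⟩
        simpa [Real.norm_eq_abs] using this
      rw [Real.norm_eq_abs, Real.norm_eq_abs, add_zero, abs_mul, abs_mul, abs_mul]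
      simp only [abs_two]
      gcongr
    have := norm_le_gronwallBound_of_norm_deriv_right_le hcont
      (fun x hx => (hh' x (Set.Ico_subset_Icc_self.trans hsub hx)).mono
        (Set.Ici_subset_Ici.mpr hx.1)) h00 bound T ⟨hT, le_refl T⟩
    rw [gronwallBound_ε0_δ0] at this
    simpa [Real.norm_eq_abs, abs_eq_zero] using le_antisymm this (abs_nonneg _)
  -- hence u = 1/v on [0,∞)
  have huv : ∀ t ∈ Set.Ici (0:ℝ), u t = 1 / v t := by
    intro t ht
    have h1' : u t * v t = 1 := by have := hzero t ht; simp only [hh_def] at this; linarith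
    field_simp [(hvpos t ht).ne']
    linarith [h1']
  -- limits
  have hexp : Tendsto (fun t : ℝ => Real.exp (-α * t)) atTop (nhds 0) := by
    have h1' : Tendsto (fun t : ℝ => α * t) atTop atTop :=
      Tendsto.const_mul_atTop hα tendsto_id
    refine (Real.tendsto_exp_neg_atTop_nhds_zero.comp h1').congr fun t => ?_
    simp [Function.comp, neg_mul]
  have hvlim : Tendsto v atTop (nhds L) := by
    have h2 : Tendsto (fun t : ℝ => L + cst * Real.exp (-α * t)) atTop (nhds (L + cst * 0)) :=
      tendsto_const_nhds.add (hexp.const_mul cst)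
    rw [mul_zero, add_zero] at h2
    exact h2
  have hulim : Tendsto (fun t => 1 / v t) atTop (nhds (1 / L)) :=
    tendsto_const_nhds.div hvlim hL.ne'
  have hsq : Tendsto (fun t => Real.sqrt (1 / v t)) atTop (nhds (Real.sqrt (1 / L))) :=
    (Real.continuous_sqrt.tendsto _).comp hulim
  have hfinal : Real.sqrt (1 / L) = Real.sqrt |μ| * Real.sqrt (c₁.re / c₃.re) := by
    rw [← Real.sqrt_mul (abs_nonneg μ)]
    congr 1
    rw [abs_of_neg hμ, hL_def]
    field_simp
  rw [← hfinal]
  apply hsq.congr'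
  filter_upwards [eventually_ge_atTop (0:ℝ)] with t ht
  rw [← huv t ht]
  exact (Complex.norm_def (A t)).symm
end

section
/- Uniqueness of the amplitude of periodic orbits of the Hopf normal form: let ω ∈ ℝ, μ < 0, and c₁, c₃ ∈ ℂ with c₁_r := Re c₁ < 0, c₃_r := Re c₃ < 0, and set r = |μ|^{1/2}√(c₁_r/c₃_r). If A : ℝ → ℂ is differentiable, satisfies dA/dt = iωA + c₁μA + c₃A|A|² for all t ∈ ℝ, is periodic (A(t + T) = A(t) for all t, for some T > 0), and is not identically zero, then |A(t)| = r for all t ∈ ℝ. -/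
lemma hopf_re_calc (ω μ : ℝ) (c₁ c₃ : ℂ) (z : ℂ) :
    ((hopfRHS ω μ c₁ c₃ z) * star z + z * star (hopfRHS ω μ c₁ c₃ z)).re
      = 2 * Complex.normSq z * (μ * c₁.re + c₃.re * Complex.normSq z) := by
  have habs : ‖z‖^2 = z.re^2 + z.im^2 := by
    rw [Complex.sq_norm, Complex.normSq_apply]; ring
  simp [hopfRHS, Complex.mul_re, Complex.add_re, Complex.mul_im, Complex.add_im,
    Complex.normSq_apply, ← Complex.ofReal_pow, habs]
  ring

/-- Uniqueness of the amplitude of periodic orbits of the Hopf normal form: any nontrivial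
periodic solution has constant modulus equal to `r = |μ|^{1/2} √(Re c₁ / Re c₃)`. -/
theorem hopf_periodic_orbit_amplitude_unique (ω μ : ℝ) (hμ : μ < 0) (c₁ c₃ : ℂ)
    (h1 : c₁.re < 0) (h3 : c₃.re < 0) (A : ℝ → ℂ)
    (hA : ∀ t : ℝ, HasDerivAt A (hopfRHS ω μ c₁ c₃ (A t)) t)
    (T : ℝ) (hT : 0 < T) (hper : ∀ t : ℝ, A (t + T) = A t)
    (hnz : ∃ t : ℝ, A t ≠ 0) :
    ∀ t : ℝ, ‖A t‖ = Real.sqrt |μ| * Real.sqrt (c₁.re / c₃.re) := by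
  set ρ : ℝ → ℝ := fun t => Complex.normSq (A t) with hρdef
  have hρeq : ∀ t, ρ t = ((A t) * star (A t)).re := by
    intro t
    simp [hρdef, Complex.mul_conj]
  -- derivative of ρ
  have hρd : ∀ t, HasDerivAt ρ (2 * ρ t * (μ * c₁.re + c₃.re * ρ t)) t := by
    intro t
    have h0 : HasDerivAt (fun s => A s * star (A s))
        ((hopfRHS ω μ c₁ c₃ (A t)) * star (A t) + A t * star (hopfRHS ω μ c₁ c₃ (A t))) t :=
      (hA t).mul (hA t).star
    have h1' := Complex.reCLM.hasFDerivAt.comp_hasDerivAt t h0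
    have h2 : (fun s => Complex.reCLM (A s * star (A s))) = ρ := by
      funext s; simp [hρeq s]
    rw [Function.comp_def, h2] at h1'
    have h3' : Complex.reCLM ((hopfRHS ω μ c₁ c₃ (A t)) * star (A t)
        + A t * star (hopfRHS ω μ c₁ c₃ (A t)))
        = 2 * ρ t * (μ * c₁.re + c₃.re * ρ t) := by
      simpa using hopf_re_calc ω μ c₁ c₃ (A t)
    rwa [h3'] at h1'
  have hρdiff : Differentiable ℝ ρ := fun t => (hρd t).differentiableAt
  have hρc : Continuous ρ := hρdiff.continuous
  have hρper : Function.Periodic ρ T := fun t => by simp [hρdef, hper t]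
  have hρnn : ∀ t, 0 ≤ ρ t := fun t => Complex.normSq_nonneg _
  -- the special radius squared
  set r2 : ℝ := |μ| * (c₁.re / c₃.re) with hr2def
  have hr2pos : 0 < r2 := by
    have : 0 < c₁.re / c₃.re := div_pos_of_neg_of_neg h1 h3
    exact mul_pos (abs_pos.2 hμ.ne) this
  have hr2root : μ * c₁.re + c₃.re * r2 = 0 := by
    rw [hr2def, abs_of_neg hμ]
    rw [mul_comm c₃.re, mul_assoc, div_mul_cancel₀ _ (ne_of_lt h3)]
    ring
  -- global max and min
  obtain ⟨tM, _, hM⟩ := isCompact_Icc.exists_isMaxOn (Set.nonempty_Icc.2 hT.le)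
    hρc.continuousOn (f := ρ)
  obtain ⟨tm, _, hm⟩ := isCompact_Icc.exists_isMinOn (Set.nonempty_Icc.2 hT.le)
    hρc.continuousOn (f := ρ)
  have hMg : ∀ t, ρ t ≤ ρ tM := by
    intro t
    obtain ⟨y, hy, hEq⟩ := hρper.exists_mem_Ico₀ hT t
    rw [hEq]
    exact hM ⟨hy.1, hy.2.le⟩
  have hmg : ∀ t, ρ tm ≤ ρ t := by
    intro t
    obtain ⟨y, hy, hEq⟩ := hρper.exists_mem_Ico₀ hT t
    rw [hEq]
    exact hm ⟨hy.1, hy.2.le⟩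
  -- derivative vanishes at the global extrema
  have hMz : 2 * ρ tM * (μ * c₁.re + c₃.re * ρ tM) = 0 :=
    IsLocalMax.hasDerivAt_eq_zero (Filter.Eventually.of_forall hMg) (hρd tM)
  have hmz : 2 * ρ tm * (μ * c₁.re + c₃.re * ρ tm) = 0 :=
    IsLocalMin.hasDerivAt_eq_zero (Filter.Eventually.of_forall hmg) (hρd tm)
  have hroot : ∀ s : ℝ, 2 * s * (μ * c₁.re + c₃.re * s) = 0 → s = 0 ∨ s = r2 := by
    intro s hs
    rcases mul_eq_zero.1 hs with h | h
    · rcases mul_eq_zero.1 h with h2 | h2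
      · norm_num at h2
      · exact Or.inl h2
    · right
      have : c₃.re * s = c₃.re * r2 := by linarith [hr2root]
      exact mul_left_cancel₀ (ne_of_lt h3) this
  -- ρ tM > 0 since A is not identically zero
  obtain ⟨t₀, ht₀⟩ := hnz
  have hρt₀ : 0 < ρ t₀ := by
    simpa [hρdef] using Complex.normSq_pos.2 ht₀
  have hMpos : 0 < ρ tM := lt_of_lt_of_le hρt₀ (hMg t₀)
  have hMval : ρ tM = r2 := by
    rcases hroot _ hMz with h | h
    · exact absurd h (ne_of_gt hMpos)
    · exact h
  -- min is either 0 or r2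
  have hρconst : ∀ t, ρ t = r2 := by
    rcases hroot _ hmz with h | h
    · -- min = 0 : ρ takes values in [0, r2], derivative nonneg, monotone; contradiction
      exfalso
      have hbound : ∀ t, ρ t ≤ r2 := fun t => hMval ▸ hMg t
      have hderiv_nonneg : ∀ t, 0 ≤ deriv ρ t := by
        intro t
        rw [(hρd t).deriv]
        have h4 : 0 ≤ μ * c₁.re + c₃.re * ρ t := by
          have := mul_le_mul_of_nonpos_left (hbound t) h3.le
          linarith [hr2root]
        have := hρnn t
        positivity
      have hmono : Monotone ρ := monotone_of_deriv_nonneg hρdiff hderiv_nonneg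
      -- monotone periodic must be constant: ρ tM ≤ ρ tm
      obtain ⟨n, hn⟩ := exists_nat_gt ((tM - tm) / T)
      have hle : tM ≤ tm + n * T := by
        have : (tM - tm) ≤ n * T := by
          rw [div_lt_iff₀ hT] at hn
          linarith
        linarith
      have : ρ tM ≤ ρ (tm + n * T) := hmono hle
      rw [(hρper.nat_mul n) tm] at this
      have : ρ tM ≤ 0 := by rw [← h]; exact this
      exact absurd (lt_of_lt_of_le (hMval ▸ hr2pos) this) (lt_irrefl 0)
    · intro t
      have h5 : ρ t ≤ r2 := hMval ▸ hMg t
      have h6 : r2 ≤ ρ t := h ▸ hmg t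
      linarith
  -- conclude
  intro t
  rw [Complex.norm_def]
  have : Complex.normSq (A t) = ρ t := rfl
  rw [this, hρconst t, hr2def, Real.sqrt_mul (abs_nonneg μ)]
end
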